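/- Let m ≥ 3 be an integer and let A(m) be the dihedral Artin group on generators s, t. Let τ ∈ A(m) be the element represented by the alternating word sts⋯s of length m if m is odd, and of length m+1 if m is even. Then for all integers p and q, one has t^p·s^q ≠ τ and s^p·t^q ≠ τ in A(m). -/

import Mathlib

/-- The alternating product `x y x y ⋯` of length `m`. -/
def altElt {M : Type*} [Monoid M] (x y : M) (m : ℕ) : M :=
  ((List.range m).map (fun i => if i % 2 = 0 then x else y)).prod

/-- The single relation `Π(s,t;m) = Π(t,s;m)` of the dihedral Artin group, on the
two-element generating set `Bool`, where `s = false` and `t = true`. -/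
def dihedralArtinRels (m : ℕ) : Set (FreeGroup Bool) :=
  {altElt (FreeGroup.of false) (FreeGroup.of true) m *
    (altElt (FreeGroup.of true) (FreeGroup.of false) m)⁻¹}

/-- The dihedral Artin group `A(m) = ⟨s, t ∣ Π(s,t;m) = Π(t,s;m)⟩`. -/
abbrev DihedralArtinGroup (m : ℕ) := PresentedGroup (dihedralArtinRels m)

/-- The generator `s` of the dihedral Artin group. -/
def DihedralArtinGroup.s (m : ℕ) : DihedralArtinGroup m := PresentedGroup.of false

/-- The generator `t` of the dihedral Artin group. -/
def DihedralArtinGroup.t (m : ℕ) : DihedralArtinGroup m := PresentedGroup.of true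

/-!
Sending `s` and `t` to the reflections `sr 0` and `sr 1` of the dihedral group of order `2m`
respects the braid relation, so it defines a homomorphism `A(m) → D_m`. It maps `τ`, of length
`2k + 1` with `k = ⌊m/2⌋`, to the reflection `sr (-k)`, whereas `t^p s^q` and `s^p t^q` are mapped
to a rotation or to one of `sr 0`, `sr 1`. For `m ≥ 3` we have `0 < k` and `k + 1 < m`, so `sr (-k)`
is neither of these.
-/

section altElt

variable {M : Type*} [Monoid M] (x y : M)

theorem altElt_succ (n : ℕ) :
    altElt x y (n + 1) = altElt x y n * if n % 2 = 0 then x else y := by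
  simp [altElt, List.range_succ]

theorem altElt_two_mul (k : ℕ) : altElt x y (2 * k) = (x * y) ^ k := by
  induction k with
  | zero => simp [altElt]
  | succ k ih =>
    rw [Nat.mul_succ, altElt_succ, altElt_succ, ih]
    simp [pow_succ, mul_assoc, Nat.add_mod]

theorem altElt_two_mul_add_one (k : ℕ) : altElt x y (2 * k + 1) = (x * y) ^ k * x := by
  simp [altElt_succ, altElt_two_mul]

theorem map_altElt {N : Type*} [Monoid N] (f : M →* N) (n : ℕ) :
    f (altElt x y n) = altElt (f x) (f y) n := by
  simp [altElt, map_list_prod, Function.comp_def, apply_ite]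

end altElt

theorem ZMod.natCast_ne_zero_of_pos_of_lt {k n : ℕ} (hk : 0 < k) (hkn : k < n) :
    (k : ZMod n) ≠ 0 := by
  rw [Ne, ZMod.natCast_eq_zero_iff]
  exact fun h => (Nat.le_of_dvd hk h).not_gt hkn

namespace DihedralGroup

variable {n : ℕ}

theorem altElt_sr_sr_two_mul (i j : ZMod n) (k : ℕ) :
    altElt (sr i) (sr j) (2 * k) = r ((k : ZMod n) * (j - i)) := by
  rw [altElt_two_mul, sr_mul_sr, r_pow, mul_comm]

theorem altElt_sr_sr_two_mul_add_one (i j : ZMod n) (k : ℕ) :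
    altElt (sr i) (sr j) (2 * k + 1) = sr (i - (k : ZMod n) * (j - i)) := by
  rw [altElt_two_mul_add_one, sr_mul_sr, r_pow, r_mul_sr, mul_comm]

theorem altElt_sr_zero_sr_one_comm :
    altElt (sr 0) (sr 1) n = (altElt (sr 1) (sr 0) n : DihedralGroup n) := by
  have hn : (n : ZMod n) = 0 := ZMod.natCast_self n
  obtain ⟨k, rfl | rfl⟩ := Nat.even_or_odd' n
  · rw [altElt_sr_sr_two_mul, altElt_sr_sr_two_mul, r.injEq]
    push_cast at hn
    linear_combination hn
  · rw [altElt_sr_sr_two_mul_add_one, altElt_sr_sr_two_mul_add_one, sr.injEq]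
    push_cast at hn
    linear_combination -hn

theorem sr_zpow_two_mul (i : ZMod n) (a : ℤ) : sr i ^ (2 * a) = 1 := by
  rw [zpow_mul, zpow_two, sr_mul_self, one_zpow]

theorem eq_or_eq_of_sr_zpow_mul_sr_zpow_eq_sr {i j l : ZMod n} {p q : ℤ}
    (h : sr i ^ p * sr j ^ q = sr l) : l = i ∨ l = j := by
  obtain ⟨a, rfl | rfl⟩ := Int.even_or_odd' p <;> obtain ⟨b, rfl | rfl⟩ := Int.even_or_odd' q <;>
    simp_all [zpow_add, sr_zpow_two_mul, sr_mul_sr, eq_comm, one_def, -r_zero]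

end DihedralGroup

namespace DihedralArtinGroup

open DihedralGroup

def toDihedralGroup (m : ℕ) : DihedralArtinGroup m →* DihedralGroup m :=
  PresentedGroup.toGroup (f := fun b => sr (if b then 1 else 0)) <| by
    rintro _ rfl
    rw [map_mul, map_inv, mul_inv_eq_one, map_altElt, map_altElt]
    simpa using altElt_sr_zero_sr_one_comm

variable {m : ℕ}

@[simp]
theorem toDihedralGroup_s : toDihedralGroup m (s m) = sr 0 :=
  PresentedGroup.toGroup.of _

@[simp]
theorem toDihedralGroup_t : toDihedralGroup m (t m) = sr 1 :=
  PresentedGroup.toGroup.of _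

theorem toDihedralGroup_altElt_s_t_two_mul_add_one (k : ℕ) :
    toDihedralGroup m (altElt (s m) (t m) (2 * k + 1)) = sr (-(k : ZMod m)) := by
  simp [map_altElt, altElt_sr_sr_two_mul_add_one]

end DihedralArtinGroup

open DihedralArtinGroup DihedralGroup

theorem dihedralArtin_ne_tau (m : ℕ) (hm : 3 ≤ m)
    (τ : DihedralArtinGroup m)
    (hτ : τ = altElt (DihedralArtinGroup.s m) (DihedralArtinGroup.t m)
      (if Odd m then m else m + 1)) :
    ∀ p q : ℤ,
      (DihedralArtinGroup.t m) ^ p * (DihedralArtinGroup.s m) ^ q ≠ τ ∧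
      (DihedralArtinGroup.s m) ^ p * (DihedralArtinGroup.t m) ^ q ≠ τ := by
  set k := m / 2
  have hτ_len : (if Odd m then m else m + 1) = 2 * k + 1 := by
    split_ifs with h <;> simp only [Nat.odd_iff] at h <;> omega
  have hτ_image : toDihedralGroup m τ = sr (-(k : ZMod m)) := by
    rw [hτ, hτ_len, toDihedralGroup_altElt_s_t_two_mul_add_one]
  have hk_ne_zero : -(k : ZMod m) ≠ 0 :=
    neg_ne_zero.mpr (ZMod.natCast_ne_zero_of_pos_of_lt (by omega) (by omega))
  have hk_ne_one : -(k : ZMod m) ≠ 1 := fun h =>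
    ZMod.natCast_ne_zero_of_pos_of_lt (k := k + 1) (n := m) (by omega) (by omega)
      (by push_cast; linear_combination -h)
  intro p q
  constructor <;> intro h <;> replace h := congrArg (toDihedralGroup m) h <;>
    rw [map_mul, map_zpow, map_zpow, toDihedralGroup_s, toDihedralGroup_t, hτ_image] at h <;>
    rcases eq_or_eq_of_sr_zpow_mul_sr_zpow_eq_sr h with h | h <;> contradiction
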